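/- For every interpretation I, a pair (o1,o2) belongs to the relation defined by a nested NFA A started in state s1 with final state set {s2} if and only if there exists a full (o1,s1,o2,s2)-run for A on I. -/
import Mathlib

set_option autoImplicit false

namespace Paper

abbrev CN := ℕ
abbrev RN := ℕ
abbrev Ind := ℕ

structure Interp where
  Dom : Type
  nonempty : Nonempty Dom
  ind : Ind → Dom
  cn : CN → Set Dom
  rn : RN → Dom → Dom → Prop

inductive ERole where
  | name (p : RN)
  | inv (p : RN)
deriving DecidableEq

def ERole.sem (I : Interp) : ERole → I.Dom → I.Dom → Prop
  | .name p => I.rn p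
  | .inv p => fun x y => I.rn p y x

def ERole.einv : ERole → ERole
  | .name p => .inv p
  | .inv p => .name p

inductive Role where
  | er (r : ERole)
  | ctest (A : CN)
  | itest (a : Ind)
deriving DecidableEq

def Role.sem (I : Interp) : Role → I.Dom → I.Dom → Prop
  | .er r => r.sem I
  | .ctest A => fun x y => x = y ∧ x ∈ I.cn A
  | .itest a => fun x y => x = I.ind a ∧ y = I.ind a

inductive NRE where
  | role (σ : Role)
  | comp (E₁ E₂ : NRE)
  | union (E₁ E₂ : NRE)
  | star (E : NRE)
  | test (E : NRE)

def NRE.sem (I : Interp) : NRE → I.Dom → I.Dom → Prop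
  | .role σ => σ.sem I
  | .comp E₁ E₂ => fun x z => ∃ y, E₁.sem I x y ∧ E₂.sem I y z
  | .union E₁ E₂ => fun x y => E₁.sem I x y ∨ E₂.sem I x y
  | .star E => Relation.ReflTransGen (E.sem I)
  | .test E => fun x y => x = y ∧ ∃ z, E.sem I x z

def Role.NoITest : Role → Prop
  | .itest _ => False
  | _ => True

def NRE.NoITest : NRE → Prop
  | .role σ => σ.NoITest
  | .comp E₁ E₂ => E₁.NoITest ∧ E₂.NoITest
  | .union E₁ E₂ => E₁.NoITest ∧ E₂.NoITest
  | .star E => E.NoITest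
  | .test E => E.NoITest

def NRE.NestFree : NRE → Prop
  | .role _ => True
  | .comp E₁ E₂ => E₁.NestFree ∧ E₂.NestFree
  | .union E₁ E₂ => E₁.NestFree ∧ E₂.NestFree
  | .star E => E.NestFree
  | .test _ => False

structure NNFA where
  n : ℕ
  St : Fin n → Type
  init : ∀ i, St i
  final : ∀ i, Set (St i)
  transRole : ∀ i, St i → Role → St i → Prop
  transTest : ∀ i, St i → Fin n → St i → Prop
  test_gt : ∀ i s j s', transTest i s j s' → i < j

inductive NNFA.Accept (M : NNFA) (I : Interp) :
    ∀ i : Fin M.n, M.St i → Set (M.St i) → I.Dom → I.Dom → Prop where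
  | refl {i : Fin M.n} {s : M.St i} {F : Set (M.St i)} {o : I.Dom} :
      s ∈ F → NNFA.Accept M I i s F o o
  | step {i : Fin M.n} {s s' : M.St i} {F : Set (M.St i)} {σ : Role} {o o' o'' : I.Dom} :
      M.transRole i s σ s' → σ.sem I o o' → NNFA.Accept M I i s' F o' o'' →
      NNFA.Accept M I i s F o o''
  | test {i : Fin M.n} {s s' : M.St i} {F : Set (M.St i)} {j : Fin M.n} {o o₁ o'' : I.Dom} :
      M.transTest i s j s' → NNFA.Accept M I j (M.init j) (M.final j) o o₁ →
      NNFA.Accept M I i s' F o o'' → NNFA.Accept M I i s F o o''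

def NNFA.NoITest (M : NNFA) : Prop :=
  ∀ i (s : M.St i) (a : Ind) (s' : M.St i), ¬ M.transRole i s (.itest a) s'

inductive RTree (L : Type) where
  | leaf (l : L)
  | one (l : L) (c : RTree L)
  | two (l : L) (c₁ c₂ : RTree L)

def RTree.label {L : Type} : RTree L → L
  | .leaf l => l
  | .one l _ => l
  | .two l _ _ => l

def RTree.leaves {L : Type} : RTree L → List L
  | .leaf l => [l]
  | .one _ c => c.leaves
  | .two _ c₁ c₂ => c₁.leaves ++ c₂.leaves

def NNFA.IsRun (M : NNFA) (I : Interp) : RTree ((Σ i, M.St i) × I.Dom) → Prop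
  | .leaf _ => True
  | .one l c => M.IsRun I c ∧
      ∃ (σ : Role) (s' : M.St l.1.1) (o' : I.Dom),
        M.transRole l.1.1 l.1.2 σ s' ∧ σ.sem I l.2 o' ∧ c.label = (⟨l.1.1, s'⟩, o')
  | .two l c₁ c₂ => M.IsRun I c₁ ∧ M.IsRun I c₂ ∧
      ∃ (j : Fin M.n) (s' : M.St l.1.1),
        M.transTest l.1.1 l.1.2 j s' ∧ c₁.label = (⟨l.1.1, s'⟩, l.2) ∧
        c₂.label = (⟨j, M.init j⟩, l.2)

def NNFA.FullRun (M : NNFA) (I : Interp) (i : Fin M.n) (o₁ : I.Dom) (s₁ : M.St i)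
    (o₂ : I.Dom) (s₂ : M.St i) (t : RTree ((Σ j, M.St j) × I.Dom)) : Prop :=
  M.IsRun I t ∧ t.label = (⟨i, s₁⟩, o₁) ∧ ((⟨i, s₂⟩ : Σ j, M.St j), o₂) ∈ t.leaves ∧
  ∀ l ∈ t.leaves, l ≠ ((⟨i, s₂⟩ : Σ j, M.St j), o₂) → l.1.2 ∈ M.final l.1.1

end Paper
namespace Paper


lemma leaves_index (M : NNFA) (I : Interp) :
    ∀ t : RTree ((Σ j, M.St j) × I.Dom), M.IsRun I t →
      ∀ l ∈ t.leaves, t.label.1.1 ≤ l.1.1 := by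
  intro t
  induction t with
  | leaf l =>
      intro _ l' hl'
      simp [RTree.leaves] at hl'
      subst hl'
      simp [RTree.label]
  | one l c ih =>
      intro hr l' hl'
      obtain ⟨hc, σ, s', o', htr, hsem, hlab⟩ := hr
      have h := ih hc l' hl'
      rw [hlab] at h
      simpa [RTree.label] using h
  | two l c₁ c₂ ih₁ ih₂ =>
      intro hr l' hl'
      obtain ⟨hc₁, hc₂, j, s', htr, hlab₁, hlab₂⟩ := hr
      simp [RTree.leaves] at hl'
      rcases hl' with h | h
      · have h' := ih₁ hc₁ l' h
        rw [hlab₁] at h'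
        simpa [RTree.label] using h'
      · have h' := ih₂ hc₂ l' h
        rw [hlab₂] at h'
        have hj := M.test_gt _ _ _ _ htr
        simp [RTree.label] at h' ⊢
        exact (hj.trans_le h').le

lemma run_allFinal (M : NNFA) (I : Interp) :
    ∀ t : RTree ((Σ j, M.St j) × I.Dom), M.IsRun I t →
      (∀ l ∈ t.leaves, l.1.2 ∈ M.final l.1.1) →
      ∃ o', M.Accept I t.label.1.1 t.label.1.2 (M.final t.label.1.1) t.label.2 o' := by
  intro t
  induction t with
  | leaf l =>
      intro _ hfin
      exact ⟨l.2, NNFA.Accept.refl (hfin l (by simp [RTree.leaves]))⟩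
  | one l c ih =>
      intro hr hfin
      obtain ⟨hc, σ, s', o', htr, hsem, hlab⟩ := hr
      obtain ⟨o'', hacc⟩ := ih hc (by intro l' hl'; exact hfin l' hl')
      rw [hlab] at hacc
      exact ⟨o'', NNFA.Accept.step htr hsem hacc⟩
  | two l c₁ c₂ ih₁ ih₂ =>
      intro hr hfin
      obtain ⟨hc₁, hc₂, j, s', htr, hlab₁, hlab₂⟩ := hr
      obtain ⟨o₁, hacc₂⟩ := ih₂ hc₂ (by
        intro l' hl'; exact hfin l' (by simp [RTree.leaves]; right; exact hl'))
      rw [hlab₂] at hacc₂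
      obtain ⟨o', hacc₁⟩ := ih₁ hc₁ (by
        intro l' hl'; exact hfin l' (by simp [RTree.leaves]; left; exact hl'))
      rw [hlab₁] at hacc₁
      exact ⟨o', NNFA.Accept.test htr hacc₂ hacc₁⟩

lemma run_accept (M : NNFA) (I : Interp) (i : Fin M.n) (s₂ : M.St i) (o₂ : I.Dom) :
    ∀ t : RTree ((Σ j, M.St j) × I.Dom), M.IsRun I t →
      ∀ (s : M.St i) (o : I.Dom), t.label = (⟨i, s⟩, o) →
      ((⟨i, s₂⟩ : Σ j, M.St j), o₂) ∈ t.leaves →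
      (∀ l ∈ t.leaves, l ≠ ((⟨i, s₂⟩ : Σ j, M.St j), o₂) → l.1.2 ∈ M.final l.1.1) →
      M.Accept I i s {s₂} o o₂ := by
  intro t
  induction t with
  | leaf l =>
      intro _ s o hlab hmem _
      simp [RTree.label] at hlab
      subst hlab
      simp [RTree.leaves] at hmem
      obtain ⟨hs, ho⟩ := hmem
      subst hs; subst ho
      exact NNFA.Accept.refl rfl
  | one l c ih =>
      intro hr s o hlab hmem hfin
      obtain ⟨hc, σ, s', o', htr, hsem, hlab'⟩ := hr
      simp [RTree.label] at hlab
      subst hlab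
      exact NNFA.Accept.step htr hsem (ih hc s' o' hlab' hmem hfin)
  | two l c₁ c₂ ih₁ ih₂ =>
      intro hr s o hlab hmem hfin
      obtain ⟨hc₁, hc₂, j, s', htr, hlab₁, hlab₂⟩ := hr
      simp [RTree.label] at hlab
      subst hlab
      have hij : i < j := M.test_gt _ _ _ _ htr
      have hnot2 : ((⟨i, s₂⟩ : Σ j, M.St j), o₂) ∉ c₂.leaves := by
        intro hmem2
        have := leaves_index M I c₂ hc₂ _ hmem2
        rw [hlab₂] at this
        simp [RTree.label] at this
        exact absurd (hij.trans_le this) (lt_irrefl i)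
      simp [RTree.leaves] at hmem
      have hmem1 : ((⟨i, s₂⟩ : Σ j, M.St j), o₂) ∈ c₁.leaves := by
        rcases hmem with h | h
        · exact h
        · exact absurd h hnot2
      obtain ⟨o₁, hacc₂⟩ := run_allFinal M I c₂ hc₂ (by
        intro l' hl'
        refine hfin l' (by simp [RTree.leaves]; right; exact hl') ?_
        intro hEq
        subst hEq
        exact hnot2 hl')
      rw [hlab₂] at hacc₂
      have hacc₁ := ih₁ hc₁ s' _ hlab₁ hmem1 (by
        intro l' hl' hne
        exact hfin l' (by simp [RTree.leaves]; left; exact hl') hne)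
      exact NNFA.Accept.test htr hacc₂ hacc₁

lemma accept_run (M : NNFA) (I : Interp) {i : Fin M.n} {s : M.St i} {F : Set (M.St i)}
    {o o' : I.Dom} (h : M.Accept I i s F o o') :
    ∃ (t : RTree ((Σ j, M.St j) × I.Dom)) (sF : M.St i), sF ∈ F ∧
      M.IsRun I t ∧ t.label = (⟨i, s⟩, o) ∧
      ((⟨i, sF⟩ : Σ j, M.St j), o') ∈ t.leaves ∧
      ∀ l ∈ t.leaves, l ≠ ((⟨i, sF⟩ : Σ j, M.St j), o') → l.1.2 ∈ M.final l.1.1 := by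
  induction h with
  | @refl k sk F ok hF =>
      refine ⟨.leaf (⟨k, sk⟩, ok), sk, hF, trivial, rfl, by simp [RTree.leaves], ?_⟩
      intro l hl hne
      simp [RTree.leaves] at hl
      exact absurd hl hne
  | @step k sk sk' F σ ok ok' ok'' htr hsem hacc ih =>
      obtain ⟨t', sF, hF, hrun, hlab, hmem, hfin⟩ := ih
      refine ⟨.one (⟨k, sk⟩, ok) t', sF, hF, ⟨hrun, σ, sk', ok', htr, hsem, hlab⟩, rfl,
        hmem, hfin⟩
  | @test k sk sk' F j ok ok₁ ok'' htr hacc₂ hacc₁ ih₂ ih₁ =>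
      obtain ⟨t₂, sF₂, hF₂, hrun₂, hlab₂, hmem₂, hfin₂⟩ := ih₂
      obtain ⟨t₁, sF, hF, hrun₁, hlab₁, hmem₁, hfin₁⟩ := ih₁
      refine ⟨.two (⟨k, sk⟩, ok) t₁ t₂, sF, hF,
        ⟨hrun₁, hrun₂, j, sk', htr, hlab₁, hlab₂⟩, rfl, ?_, ?_⟩
      · simp [RTree.leaves]; left; exact hmem₁
      · intro l hl hne
        simp [RTree.leaves] at hl
        rcases hl with h | h
        · exact hfin₁ l h hne
        · by_cases hEq : l = ((⟨j, sF₂⟩ : Σ m, M.St m), ok₁)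
          · subst hEq; exact hF₂
          · exact hfin₂ l h hEq

/-- (o₁,o₂) is in the relation defined by a nested NFA from state s₁
to final set {s₂} iff there is a full (o₁,s₁,o₂,s₂)-run. -/
theorem accept_iff_fullRun (M : NNFA) (I : Interp) (i : Fin M.n)
    (s₁ s₂ : M.St i) (o₁ o₂ : I.Dom) :
    M.Accept I i s₁ {s₂} o₁ o₂ ↔ ∃ t, M.FullRun I i o₁ s₁ o₂ s₂ t := by
  constructor
  · intro h
    obtain ⟨t, sF, hF, hrun, hlab, hmem, hfin⟩ := accept_run M I h
    have hsF : sF = s₂ := hF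
    subst hsF
    exact ⟨t, hrun, hlab, hmem, hfin⟩
  · rintro ⟨t, hrun, hlab, hmem, hfin⟩
    exact run_accept M I i s₂ o₂ t hrun s₁ o₁ hlab hmem hfin

end Paper
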